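/- Constraint-free principality: if Σ; Γ ⊢ τ : m for a constraint-free type expression τ, then there exists a minimal context Γ_min ≤ Γ (over the same variables) such that Σ; Γ_min ⊢ τ : m, and Γ_min ≤ Γ' for every context Γ' with Σ; Γ' ⊢ τ : m. -/
import Mathlib


/-- Separability modes. -/
inductive Mode : Type
  | ind | sep | deepsep
deriving DecidableEq

def Mode.toNat : Mode → ℕ
  | .ind => 0
  | .sep => 1
  | .deepsep => 2

instance : LinearOrder Mode :=
  LinearOrder.lift' Mode.toNat (fun a b => by cases a <;> cases b <;> simp [Mode.toNat])

/-- Mode composition: Ind ∘ m = Ind, Sep ∘ m = m, Deepsep ∘ m = Deepsep. -/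
def Mode.comp : Mode → Mode → Mode
  | .ind, _ => .ind
  | .sep, m => m
  | .deepsep, _ => .deepsep

/-- Constraint-free type expressions: variables, builtins, constructor
applications, arrows, products, universals and existentials. -/
inductive Ty : Type
  | var : ℕ → Ty
  | tfloat : Ty
  | tint : Ty
  | tbool : Ty
  | constr : ℕ → (n : ℕ) → (Fin n → Ty) → Ty
  | arrow : Ty → Ty → Ty
  | prod : (n : ℕ) → (Fin n → Ty) → Ty
  | all : ℕ → Ty → Ty
  | ex : ℕ → Ty → Ty

/-- A mode signature assigns a mode to each parameter of each type constructor. -/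
abbrev Sig := ℕ → ℕ → Mode

/-- A context assigns a mode to each type variable. -/
abbrev Ctx := ℕ → Mode

/-- Context update. -/
def Ctx.upd (Γ : Ctx) (a : ℕ) (m : Mode) : Ctx :=
  fun x => if x = a then m else Γ x

/-- The separability inference system with the variable axiom and the
conversion rule. -/
inductive Derives (Sg : Sig) : Ctx → Ty → Mode → Prop
  | var {Γ a m} : Γ a = m → Derives Sg Γ (.var a) m
  | conv {Γ τ m n} : Derives Sg Γ τ m → n ≤ m → Derives Sg Γ τ n
  | tfloat {Γ m} : Derives Sg Γ .tfloat m
  | tint {Γ m} : Derives Sg Γ .tint m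
  | tbool {Γ m} : Derives Sg Γ .tbool m
  | constr {Γ t n f m} :
      (∀ i : Fin n, Derives Sg Γ (f i) (Mode.comp m (Sg t i))) →
      Derives Sg Γ (.constr t n f) m
  | arrow {Γ τ₁ τ₂ m} :
      Derives Sg Γ τ₁ (Mode.comp m .ind) → Derives Sg Γ τ₂ (Mode.comp m .ind) →
      Derives Sg Γ (.arrow τ₁ τ₂) m
  | prod {Γ n f m} :
      (∀ i : Fin n, Derives Sg Γ (f i) (Mode.comp m .ind)) →
      Derives Sg Γ (.prod n f) m
  | all {Γ a τ m} (n : Mode) : Derives Sg (Γ.upd a n) τ m → Derives Sg Γ (.all a τ) m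
  | ex {Γ a τ m} : Derives Sg (Γ.upd a .ind) τ m → Derives Sg Γ (.ex a τ) m

lemma Mode.ind_le (m : Mode) : Mode.ind ≤ m := by cases m <;> decide

lemma Mode.le_deepsep (m : Mode) : m ≤ Mode.deepsep := by cases m <;> decide

instance : OrderBot Mode where
  bot := .ind
  bot_le := Mode.ind_le

lemma Mode.comp_mono {m m' : Mode} (x : Mode) (h : m ≤ m') :
    Mode.comp m x ≤ Mode.comp m' x := by
  cases m <;> cases m' <;> cases x <;> first | exact le_rfl | decide | exact absurd h (by decide)

/-- The minimal mode demanded of each variable in order to derive τ at mode m. -/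
def demand (Sg : Sig) : Ty → Mode → Ctx
  | .var b, m => fun a => if a = b then m else .ind
  | .tfloat, _ => fun _ => .ind
  | .tint, _ => fun _ => .ind
  | .tbool, _ => fun _ => .ind
  | .constr t n f, m => fun a =>
      Finset.univ.sup (fun i : Fin n => demand Sg (f i) (Mode.comp m (Sg t i)) a)
  | .arrow τ₁ τ₂, m => fun a =>
      max (demand Sg τ₁ (Mode.comp m .ind) a) (demand Sg τ₂ (Mode.comp m .ind) a)
  | .prod n f, m => fun a =>
      Finset.univ.sup (fun i : Fin n => demand Sg (f i) (Mode.comp m .ind) a)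
  | .all b τ, m => fun a => if a = b then .ind else demand Sg τ m a
  | .ex b τ, m => fun a => if a = b then .ind else demand Sg τ m a

lemma demand_mono (Sg : Sig) (τ : Ty) {m m' : Mode} (h : m ≤ m') (a : ℕ) :
    demand Sg τ m a ≤ demand Sg τ m' a := by
  induction τ generalizing m m' with
  | var b => simp only [demand]; split <;> [exact h; exact le_rfl]
  | tfloat => exact le_rfl
  | tint => exact le_rfl
  | tbool => exact le_rfl
  | constr t n f ih =>
      simp only [demand]
      exact Finset.sup_mono_fun fun i _ => ih i (Mode.comp_mono _ h)
  | arrow τ₁ τ₂ ih₁ ih₂ =>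
      simp only [demand]
      exact max_le_max (ih₁ (Mode.comp_mono _ h)) (ih₂ (Mode.comp_mono _ h))
  | prod n f ih =>
      simp only [demand]
      exact Finset.sup_mono_fun fun i _ => ih i (Mode.comp_mono _ h)
  | all b τ ih => simp only [demand]; split <;> [exact le_rfl; exact ih h]
  | ex b τ ih => simp only [demand]; split <;> [exact le_rfl; exact ih h]

/-- Completeness of `demand`: any derivable context dominates the demand. -/
lemma demand_le {Sg : Sig} {Γ : Ctx} {τ : Ty} {m : Mode}
    (h : Derives Sg Γ τ m) : ∀ a, demand Sg τ m a ≤ Γ a := by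
  induction h with
  | var hΓ =>
      intro a
      simp only [demand]
      split
      · subst hΓ; simp_all
      · exact Mode.ind_le _
  | conv h hle ih => intro a; exact le_trans (demand_mono _ _ hle a) (ih a)
  | tfloat => intro a; exact Mode.ind_le _
  | tint => intro a; exact Mode.ind_le _
  | tbool => intro a; exact Mode.ind_le _
  | constr h ih => intro a; exact Finset.sup_le fun i _ => ih i a
  | arrow h₁ h₂ ih₁ ih₂ => intro a; exact max_le (ih₁ a) (ih₂ a)
  | prod h ih => intro a; exact Finset.sup_le fun i _ => ih i a
  | all n h ih =>
      intro a; simp only [demand]; split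
      · exact Mode.ind_le _
      · next hne => have := ih a; simpa [Ctx.upd, hne] using this
  | ex h ih =>
      intro a; simp only [demand]; split
      · exact Mode.ind_le _
      · next hne => have := ih a; simpa [Ctx.upd, hne] using this

/-- Soundness of `demand`: derivability transfers to any context dominating
the demand (at any smaller mode). -/
lemma derives_of_demand_le {Sg : Sig} {Γ : Ctx} {τ : Ty} {m : Mode}
    (h : Derives Sg Γ τ m) :
    ∀ n, n ≤ m → ∀ Γ' : Ctx, (∀ a, demand Sg τ n a ≤ Γ' a) → Derives Sg Γ' τ n := by
  induction h with
  | @var _ b _ hΓ =>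
      intro n hn Γ' hd
      have hb := hd b
      simp only [demand, if_pos rfl] at hb
      exact Derives.conv (Derives.var rfl) hb
  | conv h hle ih => intro n hn Γ' hd; exact ih n (le_trans hn hle) Γ' hd
  | tfloat => intro n _ Γ' _; exact Derives.tfloat
  | tint => intro n _ Γ' _; exact Derives.tint
  | tbool => intro n _ Γ' _; exact Derives.tbool
  | @constr _ t k f _ h ih =>
      intro n hn Γ' hd
      refine Derives.constr fun i => ih i _ (Mode.comp_mono _ hn) Γ' fun a => ?_
      have := hd a; simp only [demand] at this
      exact le_trans
        (Finset.le_sup (f := fun i : Fin k => demand Sg (f i) (Mode.comp n (Sg t i)) a)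
          (Finset.mem_univ i)) this
  | arrow h₁ h₂ ih₁ ih₂ =>
      intro n hn Γ' hd
      exact Derives.arrow
        (ih₁ _ (Mode.comp_mono _ hn) Γ' fun a => le_trans (le_max_left _ _)
          (by have := hd a; simpa only [demand] using this))
        (ih₂ _ (Mode.comp_mono _ hn) Γ' fun a => le_trans (le_max_right _ _)
          (by have := hd a; simpa only [demand] using this))
  | @prod _ k f _ h ih =>
      intro n hn Γ' hd
      refine Derives.prod fun i => ih i _ (Mode.comp_mono _ hn) Γ' fun a => ?_
      have := hd a; simp only [demand] at this
      exact le_trans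
        (Finset.le_sup (f := fun i : Fin k => demand Sg (f i) (Mode.comp n Mode.ind) a)
          (Finset.mem_univ i)) this
  | @all _ b τ _ k h ih =>
      intro n hn Γ' hd
      refine Derives.all Mode.deepsep (ih n hn _ fun a => ?_)
      by_cases hab : a = b
      · simp [Ctx.upd, hab, Mode.le_deepsep]
      · have := hd a
        simp only [demand, if_neg hab] at this
        simpa [Ctx.upd, hab] using this
  | @ex G b τ' m' h ih =>
      intro n hn Γ' hd
      refine Derives.ex (ih n hn _ fun a => ?_)
      by_cases hab : a = b
      · subst hab
        have h2 : demand Sg τ' m' a ≤ Mode.ind := by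
          simpa [Ctx.upd] using demand_le h a
        have h1 : demand Sg τ' n a ≤ Mode.ind := le_trans (demand_mono _ _ hn a) h2
        simpa [Ctx.upd] using h1
      · have := hd a
        simp only [demand, if_neg hab] at this
        simpa [Ctx.upd, hab] using this

/-- Constraint-free principality: any derivable judgment admits a
minimal context, below the given one and below every other context at
which the judgment is derivable. -/
theorem derives_principal_ctx {Sg : Sig} {Γ : Ctx} {τ : Ty} {m : Mode}
    (h : Derives Sg Γ τ m) :
    ∃ Γmin : Ctx, Derives Sg Γmin τ m ∧ (∀ a, Γmin a ≤ Γ a) ∧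
      ∀ Γ' : Ctx, Derives Sg Γ' τ m → ∀ a, Γmin a ≤ Γ' a := by
  refine ⟨demand Sg τ m, ?_, demand_le h, fun Γ' h' => demand_le h'⟩
  exact derives_of_demand_le h m le_rfl _ fun a => le_rfl
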